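/- arXiv:2507.06338 — 3 statements merged into one kernel-verified Lean document; each statement's English description precedes it below -/
import Mathlib

section
/- In the contraction procedure on a simple graph $G=(V,E)$ with $|V|=n$, where each vertex is independently put in $D$ with probability $1/x$, and $H$ consists of (i) all edges incident to a vertex $v$ whose closed neighborhood misses $D$ (i.e., $\mathrm{Head}(v)=\bot$) and (ii) one edge from each vertex $v \notin D$ with a neighbor in $D$ to some such neighbor, the expected size of $H$ is $O(nx)$. -/
open MeasureTheory
open scoped Classical

private lemma analytic_bound {x p q : ℝ} (hx : 2 ≤ x) (hp : p = 1 / x) (hq : q = 1 - p)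
    (d : ℕ) : (d : ℝ) * q ^ (d + 1) ≤ x := by
  have hx0 : (0:ℝ) < x := by linarith
  have hp0 : 0 < p := by rw [hp]; positivity
  have hp2 : p ≤ 1/2 := by
    rw [hp, div_le_div_iff₀ hx0 (by norm_num)]; linarith
  have hq0 : 0 ≤ q := by rw [hq]; linarith
  have hq1 : q ≤ 1 := by rw [hq]; linarith
  rcases Nat.eq_zero_or_pos d with hd | hd
  · simp [hd]; linarith
  have key : (d : ℝ) * q ^ d ≤ x := by
    have hxp : x = 1 / p := by rw [hp]; field_simp
    rw [hxp, le_div_iff₀ hp0]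
    have h1 : (d : ℝ) * p ≤ (1 + p) ^ d := by
      have := one_add_mul_le_pow (a := p) (by linarith) d
      linarith
    calc (d : ℝ) * q ^ d * p = ((d:ℝ) * p) * q ^ d := by ring
      _ ≤ (1 + p) ^ d * q ^ d := by
          exact mul_le_mul_of_nonneg_right h1 (pow_nonneg hq0 d)
      _ = ((1 + p) * q) ^ d := by rw [mul_pow]
      _ ≤ 1 := by
          apply pow_le_one₀
          · nlinarith
          · nlinarith
  calc (d : ℝ) * q ^ (d + 1) = (d : ℝ) * q ^ d * q := by ring
    _ ≤ (d : ℝ) * q ^ d * 1 := by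
        apply mul_le_mul_of_nonneg_left hq1
        positivity
    _ = (d : ℝ) * q ^ d := by ring
    _ ≤ x := key

/-- In the contraction procedure on a simple graph `G` with `n` vertices, where every
vertex is independently sampled (put into `D`) with probability `1/x`, the set `H`
consisting of (i) all edges incident to a vertex whose closed neighborhood contains no
sampled vertex (`Head v = ⊥`), plus (ii) at most one edge per vertex joining it to a
sampled neighbor (at most `n` edges in total), has expected size `O(n x)`. -/
theorem contract_retained_edges_expected_size :
    ∃ C : ℝ, 0 < C ∧
      ∀ (V : Type) [Fintype V] [DecidableEq V] (G : SimpleGraph V) (x : ℝ) (hx : 2 ≤ x),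
        (∫ ω : V → Bool,
            (((Finset.univ.filter (fun e : Sym2 V => e ∈ G.edgeSet ∧
                ∃ v ∈ e, ∀ w : V, (w = v ∨ G.Adj v w) → ω w = false)).card : ℝ)
              + (Fintype.card V : ℝ))
          ∂ (Measure.pi fun _ : V =>
              (PMF.bernoulli (Real.toNNReal (1 / x))
                (by
                  have hx1 : (1 : ℝ) / x ≤ 1 := by
                    rw [div_le_one (by linarith)]; linarith
                  exact Real.toNNReal_le_one.mpr hx1)).toMeasure))
        ≤ C * (Fintype.card V : ℝ) * x := by
  refine ⟨2, by norm_num, ?_⟩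
  intro V _ _ G x hx
  have hx0 : (0:ℝ) < x := by linarith
  set p : ℝ := 1 / x with hp
  have hp0 : 0 < p := by positivity
  have hp1 : p ≤ 1 := by
    rw [hp, div_le_one hx0]; linarith
  set q : ℝ := 1 - p with hq
  have hq0 : 0 ≤ q := by simp only [hq]; linarith
  have hple : Real.toNNReal (1 / x) ≤ 1 := Real.toNNReal_le_one.mpr hp1
  set ν : Measure Bool := (PMF.bernoulli (Real.toNNReal (1 / x)) hple).toMeasure with hν
  set μ : Measure (V → Bool) := Measure.pi fun _ : V => ν with hμ
  have : IsProbabilityMeasure ν := inferInstance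
  have hμprob : IsProbabilityMeasure μ := inferInstance
  -- the bad event for vertex v
  set Bad : V → Set (V → Bool) :=
    fun v => {ω | ∀ w : V, (w = v ∨ G.Adj v w) → ω w = false} with hBad
  -- measure of the bad event
  have hν_false : ν {false} = ENNReal.ofReal q := by
    rw [hν, PMF.toMeasure_apply_singleton _ _ (measurableSet_singleton _)]
    show (((1 : NNReal) - Real.toNNReal (1/x) : NNReal) : ENNReal) = ENNReal.ofReal q
    rw [hq, ENNReal.ofReal_sub _ hp0.le, ENNReal.ofReal_one, hp, ENNReal.coe_sub, ENNReal.coe_one]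
    rfl
  have hBadMeas : ∀ v, μ (Bad v) = (ENNReal.ofReal q) ^ (G.degree v + 1) := by
    intro v
    have hset : Bad v = Set.pi Set.univ
        (fun w => if w = v ∨ G.Adj v w then ({false} : Set Bool) else Set.univ) := by
      ext ω
      simp only [hBad, Set.mem_setOf_eq, Set.mem_pi, Set.mem_univ, true_implies]
      refine forall_congr' fun w => ?_
      split_ifs with h
      · simp [h]
      · simp [h]
    rw [hset, hμ, Measure.pi_pi]
    have hcard : (Finset.univ.filter (fun w => w = v ∨ G.Adj v w)).card
        = G.degree v + 1 := by
      have : Finset.univ.filter (fun w => w = v ∨ G.Adj v w)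
          = insert v (G.neighborFinset v) := by
        ext w
        simp [SimpleGraph.mem_neighborFinset, eq_comm, or_comm]
      rw [this, Finset.card_insert_of_notMem (by simp), SimpleGraph.card_neighborFinset_eq_degree]
    calc (∏ w : V, ν (if w = v ∨ G.Adj v w then ({false} : Set Bool) else Set.univ))
        = ∏ w : V, (if w = v ∨ G.Adj v w then ν {false} else 1) := by
          refine Finset.prod_congr rfl fun w _ => ?_
          by_cases h : w = v ∨ G.Adj v w
          · rw [if_pos h, if_pos h]
          · rw [if_neg h, if_neg h]; exact measure_univ
      _ = ∏ w ∈ Finset.univ.filter (fun w => w = v ∨ G.Adj v w), ν {false} := by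
          rw [Finset.prod_filter]
      _ = (ν {false}) ^ (G.degree v + 1) := by rw [Finset.prod_const, hcard]
      _ = (ENNReal.ofReal q) ^ (G.degree v + 1) := by rw [hν_false]
  -- pointwise bound on the number of retained type-(i) edges
  have hpoint : ∀ ω : V → Bool,
      ((Finset.univ.filter (fun e : Sym2 V => e ∈ G.edgeSet ∧
          ∃ v ∈ e, ∀ w : V, (w = v ∨ G.Adj v w) → ω w = false)).card : ℝ)
        ≤ ∑ v : V, Set.indicator (Bad v) (fun _ => (G.degree v : ℝ)) ω := by
    intro ω
    have hsub : (Finset.univ.filter (fun e : Sym2 V => e ∈ G.edgeSet ∧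
          ∃ v ∈ e, ∀ w : V, (w = v ∨ G.Adj v w) → ω w = false))
        ⊆ (Finset.univ.filter (fun v : V => ω ∈ Bad v)).biUnion
            (fun v => G.incidenceFinset v) := by
      intro e he
      simp only [Finset.mem_filter, Finset.mem_univ, true_and] at he
      obtain ⟨hedge, v, hve, hv⟩ := he
      simp only [Finset.mem_biUnion, Finset.mem_filter, Finset.mem_univ, true_and]
      exact ⟨v, hv, by rw [SimpleGraph.mem_incidenceFinset]; exact ⟨hedge, hve⟩⟩
    calc ((Finset.univ.filter (fun e : Sym2 V => e ∈ G.edgeSet ∧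
          ∃ v ∈ e, ∀ w : V, (w = v ∨ G.Adj v w) → ω w = false)).card : ℝ)
        ≤ (((Finset.univ.filter (fun v : V => ω ∈ Bad v)).biUnion
            (fun v => G.incidenceFinset v)).card : ℝ) := by
          exact_mod_cast Finset.card_le_card hsub
      _ ≤ ∑ v ∈ Finset.univ.filter (fun v : V => ω ∈ Bad v),
            ((G.incidenceFinset v).card : ℝ) := by
          exact_mod_cast Finset.card_biUnion_le
      _ = ∑ v ∈ Finset.univ.filter (fun v : V => ω ∈ Bad v), (G.degree v : ℝ) := by
          refine Finset.sum_congr rfl fun v _ => ?_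
          rw [SimpleGraph.card_incidenceFinset_eq_degree]
      _ = ∑ v : V, Set.indicator (Bad v) (fun _ => (G.degree v : ℝ)) ω := by
          rw [Finset.sum_filter]
          refine Finset.sum_congr rfl fun v _ => ?_
          by_cases h : ω ∈ Bad v <;> simp [Set.indicator, h]
  -- integrate
  have hBadMeasurable : ∀ v, MeasurableSet (Bad v) := fun v => (Set.toFinite _).measurableSet
  have hint1 : Integrable (fun ω : V → Bool =>
      ((Finset.univ.filter (fun e : Sym2 V => e ∈ G.edgeSet ∧
          ∃ v ∈ e, ∀ w : V, (w = v ∨ G.Adj v w) → ω w = false)).card : ℝ)) μ :=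
    Integrable.of_finite
  have hint2 : Integrable (fun ω : V → Bool =>
      ∑ v : V, Set.indicator (Bad v) (fun _ => (G.degree v : ℝ)) ω) μ :=
    Integrable.of_finite
  have hsplit : (∫ ω : V → Bool,
        (((Finset.univ.filter (fun e : Sym2 V => e ∈ G.edgeSet ∧
            ∃ v ∈ e, ∀ w : V, (w = v ∨ G.Adj v w) → ω w = false)).card : ℝ)
          + (Fintype.card V : ℝ)) ∂μ)
      = (∫ ω : V → Bool,
          ((Finset.univ.filter (fun e : Sym2 V => e ∈ G.edgeSet ∧
            ∃ v ∈ e, ∀ w : V, (w = v ∨ G.Adj v w) → ω w = false)).card : ℝ) ∂μ)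
        + (Fintype.card V : ℝ) := by
    rw [integral_add hint1 (integrable_const _), integral_const]
    simp
  have hInt1 : (∫ ω : V → Bool,
        ((Finset.univ.filter (fun e : Sym2 V => e ∈ G.edgeSet ∧
          ∃ v ∈ e, ∀ w : V, (w = v ∨ G.Adj v w) → ω w = false)).card : ℝ) ∂μ)
      ≤ (Fintype.card V : ℝ) * x := by
    calc (∫ ω : V → Bool,
          ((Finset.univ.filter (fun e : Sym2 V => e ∈ G.edgeSet ∧
            ∃ v ∈ e, ∀ w : V, (w = v ∨ G.Adj v w) → ω w = false)).card : ℝ) ∂μ)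
        ≤ ∫ ω : V → Bool,
            (∑ v : V, Set.indicator (Bad v) (fun _ => (G.degree v : ℝ)) ω) ∂μ := by
          exact integral_mono hint1 hint2 hpoint
      _ = ∑ v : V, ∫ ω : V → Bool,
            Set.indicator (Bad v) (fun _ => (G.degree v : ℝ)) ω ∂μ := by
          exact integral_finset_sum _ fun v _ => Integrable.of_finite
      _ = ∑ v : V, (μ (Bad v)).toReal * (G.degree v : ℝ) := by
          refine Finset.sum_congr rfl fun v _ => ?_
          rw [integral_indicator_const _ (hBadMeasurable v), smul_eq_mul, measureReal_def]
      _ = ∑ v : V, (G.degree v : ℝ) * q ^ (G.degree v + 1) := by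
          refine Finset.sum_congr rfl fun v _ => ?_
          rw [hBadMeas v, ENNReal.toReal_pow, ENNReal.toReal_ofReal hq0, mul_comm]
      _ ≤ ∑ _v : V, x := by
          refine Finset.sum_le_sum fun v _ => ?_
          exact analytic_bound hx hp hq (G.degree v)
      _ = (Fintype.card V : ℝ) * x := by
          rw [Finset.sum_const, Finset.card_univ, nsmul_eq_mul]
  rw [hsplit]
  have hn0 : (0:ℝ) ≤ (Fintype.card V : ℝ) := Nat.cast_nonneg _
  nlinarith [hInt1]
end

section
/- Let $G=(V,E)$ be a simple graph, $D \subseteq V$, and define $\mathrm{Head}: V \to V \cup \{\bot\}$ as in the contraction procedure (heads in $D$, or $\bot$ if no neighbor in $D$). Let $G' = (D, E')$ where $(u',v') \in E'$ iff $u' \neq v'$, $u',v' \in D$, and there exists $(u,v) \in E$ with $\mathrm{Head}(u)=u'$, $\mathrm{Head}(v)=v'$ (with $\mathrm{Head}(w)=w$ for $w \in D$). Let $H$ be the set of edges incident to $\bot$-head vertices together with edges $(v, \mathrm{Head}(v))$ for clustered $v$. If $H'$ is an $L$-spanner of $G'$, then $H \cup \{\text{one corresponding edge of } G \text{ per edge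 of } H'\}$ is a $(3L+2)$-spanner of $G$ with at most $|H'| + |H|$ edges. -/
private lemma edist_le_mul_of_adj {V : Type*} (A B : SimpleGraph V) (c : ℕ∞) (hc : c ≠ 0)
    (h : ∀ x y, A.Adj x y → B.edist x y ≤ c) (u v : V) :
    B.edist u v ≤ c * A.edist u v := by
  by_cases hr : A.Reachable u v
  · obtain ⟨p, hp⟩ := hr.exists_walk_length_eq_edist
    rw [← hp]
    clear hp
    induction p with
    | nil => simp
    | @cons a b d ha q ih =>
      calc B.edist a d ≤ B.edist a b + B.edist b d := B.edist_triangle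
        _ ≤ c + c * q.length := add_le_add (h _ _ ha) (ih ⟨q⟩)
        _ = c * ((q.length : ℕ∞) + 1) := by ring
        _ = c * ((q.cons ha).length : ℕ∞) := by
            rw [SimpleGraph.Walk.length_cons]; push_cast; ring
  · rw [A.edist_eq_top_of_not_reachable hr, ENat.mul_top hc]
    exact le_top

/-- Contraction preserves spanners: given the clustering `Head` (heads lie in `D`; `none`
iff no neighbor lies in `D`), the contracted graph `G'` on `D`, the retained edge set
`Hedges` (edges incident to `⊥`-head vertices together with the edges `(v, Head v)`),
and an `L`-spanner `H'` of `G'`, the graph formed by `Hedges` together with one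
corresponding edge of `G` per edge of `H'` is a `(3L+2)`-spanner of `G` with at most
`|H'| + |Hedges|` edges. -/
theorem contract_spanner_lift {V : Type*} [Fintype V] [DecidableEq V]
    (G : SimpleGraph V) (D : Set V) (Head : V → Option V) (L : ℕ)
    (hHeadD : ∀ v ∈ D, Head v = some v)
    (hHeadAdj : ∀ v, v ∉ D → ∀ w, Head v = some w → w ∈ D ∧ G.Adj v w)
    (hHeadNone : ∀ v, v ∉ D → Head v = none → ∀ w ∈ D, ¬ G.Adj v w)
    (G' : SimpleGraph V)
    (hG' : ∀ u' v', G'.Adj u' v' ↔ u' ≠ v' ∧ u' ∈ D ∧ v' ∈ D ∧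
      ∃ u v, G.Adj u v ∧ Head u = some u' ∧ Head v = some v')
    (Hedges : Set (Sym2 V))
    (hHedges : Hedges =
      {e | ∃ u v, e = s(u, v) ∧ G.Adj u v ∧ (Head u = none ∨ Head v = none)} ∪
      {e | ∃ v w, e = s(v, w) ∧ Head v = some w ∧ v ≠ w})
    (H' : SimpleGraph V) (hH'sub : H' ≤ G')
    (hH'span : ∀ u v, H'.edist u v ≤ (L : ℕ∞) * G'.edist u v)
    (corr : Sym2 V → Sym2 V)
    (hcorr : ∀ u' v', H'.Adj u' v' → ∃ u v, corr s(u', v') = s(u, v) ∧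
      G.Adj u v ∧ Head u = some u' ∧ Head v = some v')
    (S : SimpleGraph V)
    (hS : S = SimpleGraph.fromEdgeSet (Hedges ∪ corr '' H'.edgeSet)) :
    S ≤ G ∧
    (∀ u v, S.edist u v ≤ ((3 * L + 2 : ℕ) : ℕ∞) * G.edist u v) ∧
    S.edgeSet.ncard ≤ H'.edgeSet.ncard + Hedges.ncard := by
  -- every edge in the defining set is a G-edge
  have hsub : Hedges ∪ corr '' H'.edgeSet ⊆ G.edgeSet := by
    rintro e (he | ⟨e', he', rfl⟩)
    · rw [hHedges] at he
      rcases he with ⟨u, v, rfl, hadj, _⟩ | ⟨v, w, rfl, hv, hne⟩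
      · exact hadj
      · have hvD : v ∉ D := by
          intro hvD
          rw [hHeadD v hvD] at hv
          exact hne (Option.some_injective _ hv)
        exact (hHeadAdj v hvD w hv).2
    · induction e' using Sym2.ind with
      | _ x y =>
        obtain ⟨u, v, hcuv, hGuv, _, _⟩ := hcorr x y he'
        rw [hcuv]
        exact hGuv
  have hSG : S ≤ G := by
    rw [hS]
    intro a b hab
    rw [SimpleGraph.fromEdgeSet_adj] at hab
    exact hsub hab.1
  have hSadj : ∀ a b : V, s(a, b) ∈ Hedges ∪ corr '' H'.edgeSet → a ≠ b → S.Adj a b := by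
    intro a b hm hne
    rw [hS, SimpleGraph.fromEdgeSet_adj]
    exact ⟨hm, hne⟩
  -- edist to head ≤ 1
  have hhead : ∀ v w : V, Head v = some w → S.edist v w ≤ 1 := by
    intro v w hv
    rcases eq_or_ne v w with rfl | hne
    · simp [SimpleGraph.edist_self]
    · have : S.Adj v w := hSadj v w (Or.inl (hHedges ▸ Or.inr ⟨v, w, rfl, hv, hne⟩)) hne
      exact le_of_eq (SimpleGraph.edist_eq_one_iff_adj.mpr this)
  -- each H'-edge lifts to an S-path of length ≤ 3
  have hA : ∀ x y : V, H'.Adj x y → S.edist x y ≤ 3 := by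
    intro x y hxy
    obtain ⟨u, v, hcuv, hGuv, hu, hv⟩ := hcorr x y hxy
    have hmem : s(u, v) ∈ corr '' H'.edgeSet := ⟨s(x, y), hxy, hcuv⟩
    have hSuv : S.Adj u v := hSadj u v (Or.inr hmem) hGuv.ne
    calc S.edist x y ≤ S.edist x u + S.edist u y := S.edist_triangle
      _ ≤ S.edist x u + (S.edist u v + S.edist v y) := add_le_add_right S.edist_triangle _
      _ ≤ 1 + (1 + 1) := by
          refine add_le_add ?_ (add_le_add ?_ ?_)
          · rw [SimpleGraph.edist_comm]; exact hhead u x hu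
          · exact le_of_eq (SimpleGraph.edist_eq_one_iff_adj.mpr hSuv)
          · exact hhead v y hv
      _ = 3 := by norm_num
  have hB : ∀ x y : V, S.edist x y ≤ 3 * H'.edist x y :=
    edist_le_mul_of_adj H' S 3 (by norm_num) hA
  -- Head of any vertex with a head lies in D
  have hheadD : ∀ v w : V, Head v = some w → w ∈ D := by
    intro v w hv
    by_cases hvD : v ∈ D
    · rw [hHeadD v hvD] at hv
      rwa [← Option.some_injective _ hv]
    · exact (hHeadAdj v hvD w hv).1
  -- each G-edge has S-distance ≤ 3L+2
  have hC : ∀ u v : V, G.Adj u v → S.edist u v ≤ ((3 * L + 2 : ℕ) : ℕ∞) := by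
    intro u v huv
    have h2le : (2 : ℕ∞) ≤ ((3 * L + 2 : ℕ) : ℕ∞) := by
      push_cast; exact le_add_self
    rcases hu : Head u with _ | u'
    · have : S.Adj u v :=
        hSadj u v (Or.inl (hHedges ▸ Or.inl ⟨u, v, rfl, huv, Or.inl hu⟩)) huv.ne
      refine le_trans (le_of_eq (SimpleGraph.edist_eq_one_iff_adj.mpr this)) ?_
      exact le_trans (by norm_num) h2le
    rcases hv : Head v with _ | v'
    · have : S.Adj u v :=
        hSadj u v (Or.inl (hHedges ▸ Or.inl ⟨u, v, rfl, huv, Or.inr hv⟩)) huv.ne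
      refine le_trans (le_of_eq (SimpleGraph.edist_eq_one_iff_adj.mpr this)) ?_
      exact le_trans (by norm_num) h2le
    -- both have heads
    have hmid : S.edist u' v' ≤ 3 * (L : ℕ∞) := by
      rcases eq_or_ne u' v' with rfl | hne
      · simp [SimpleGraph.edist_self]
      · have hG'adj : G'.Adj u' v' :=
          (hG' u' v').mpr ⟨hne, hheadD u u' hu, hheadD v v' hv, u, v, huv, hu, hv⟩
        have h1 : G'.edist u' v' = 1 := SimpleGraph.edist_eq_one_iff_adj.mpr hG'adj
        have hH'd : H'.edist u' v' ≤ (L : ℕ∞) := by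
          have := hH'span u' v'
          rwa [h1, mul_one] at this
        calc S.edist u' v' ≤ 3 * H'.edist u' v' := hB u' v'
          _ ≤ 3 * (L : ℕ∞) := by exact mul_le_mul_right hH'd 3
    calc S.edist u v ≤ S.edist u u' + S.edist u' v := S.edist_triangle
      _ ≤ S.edist u u' + (S.edist u' v' + S.edist v' v) := add_le_add_right S.edist_triangle _
      _ ≤ 1 + (3 * (L : ℕ∞) + 1) := by
          refine add_le_add (hhead u u' hu) (add_le_add hmid ?_)
          rw [SimpleGraph.edist_comm]; exact hhead v v' hv
      _ ≤ ((3 * L + 2 : ℕ) : ℕ∞) := by push_cast; ring_nf; exact le_refl _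
  refine ⟨hSG, ?_, ?_⟩
  · exact fun u v => edist_le_mul_of_adj G S _ (by positivity) hC u v
  · have hedge : S.edgeSet ⊆ Hedges ∪ corr '' H'.edgeSet := by
      rw [hS, SimpleGraph.edgeSet_fromEdgeSet]
      exact Set.diff_subset
    calc S.edgeSet.ncard ≤ (Hedges ∪ corr '' H'.edgeSet).ncard :=
          Set.ncard_le_ncard hedge (Set.toFinite _)
      _ ≤ Hedges.ncard + (corr '' H'.edgeSet).ncard := Set.ncard_union_le _ _
      _ ≤ Hedges.ncard + H'.edgeSet.ncard := by
          exact add_le_add_right (Set.ncard_image_le (Set.toFinite _)) _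
      _ = H'.edgeSet.ncard + Hedges.ncard := by ring
end

section
/- In the ultra-sparse contraction procedure with vertex sampling probability $1/x$ ($x \geq 2$), the expected number of vertices $v$ with $f(v) = v$ (i.e., $|V'|$) is at most $\frac{2n}{x}$. Specifically: $\mathbb{E}|D| = n/x$; each heavy vertex not in $D$ has $f(v)=v$ with probability at most $(1-1/x)^{10x\log x + 1} \leq x^{-10}$; and each light vertex not in $D$ has $f(v)=v$ with probability at most $x^{-10}$, since it requires at least $10x\log x$ unsampled vertices within distance $10x\log x$. -/
open MeasureTheory
open scoped Classical ENNReal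

section Helpers

variable {V : Type} [Fintype V] [DecidableEq V]

private lemma bern_false' (p : NNReal) (hp : p ≤ 1) :
    (PMF.bernoulli p hp).toMeasure {false} = 1 - (p : ℝ≥0∞) := by
  rw [PMF.toMeasure_apply_singleton (PMF.bernoulli p hp) false (measurableSet_singleton _),
    PMF.bernoulli_apply]; simp [ENNReal.coe_sub]

private lemma bern_true' (p : NNReal) (hp : p ≤ 1) :
    (PMF.bernoulli p hp).toMeasure {true} = (p : ℝ≥0∞) := by
  rw [PMF.toMeasure_apply_singleton (PMF.bernoulli p hp) true (measurableSet_singleton _),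
    PMF.bernoulli_apply]; rfl

private lemma pi_cyl' (p : NNReal) (hp : p ≤ 1) (S : Finset V) :
    Measure.pi (fun _ : V => (PMF.bernoulli p hp).toMeasure)
      {ω : V → Bool | ∀ u ∈ S, ω u = false} = (1 - (p : ℝ≥0∞)) ^ S.card := by
  have hset : {ω : V → Bool | ∀ u ∈ S, ω u = false}
      = Set.univ.pi (fun u => if u ∈ S then ({false} : Set Bool) else Set.univ) := by
    ext ω
    simp only [Set.mem_setOf_eq, Set.mem_pi, Set.mem_univ, forall_true_left]
    constructor
    · intro h u
      by_cases hu : u ∈ S <;> simp [hu]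
      exact h u hu
    · intro h u hu
      have := h u
      simpa [hu] using this
  rw [hset, Measure.pi_pi]
  have : ∀ u : V, (PMF.bernoulli p hp).toMeasure (if u ∈ S then ({false} : Set Bool) else Set.univ)
      = if u ∈ S then (1 - (p : ℝ≥0∞)) else 1 := by
    intro u; by_cases hu : u ∈ S <;> simp only [hu, if_true, if_false, bern_false', measure_univ]
  simp_rw [this]
  rw [Finset.prod_ite_mem, Finset.univ_inter, Finset.prod_const]

private lemma pi_true' (p : NNReal) (hp : p ≤ 1) (v : V) :
    Measure.pi (fun _ : V => (PMF.bernoulli p hp).toMeasure)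
      {ω : V → Bool | ω v = true} = (p : ℝ≥0∞) := by
  have hset : {ω : V → Bool | ω v = true}
      = Set.univ.pi (fun u => if u = v then ({true} : Set Bool) else Set.univ) := by
    ext ω
    simp only [Set.mem_setOf_eq, Set.mem_pi, Set.mem_univ, forall_true_left]
    constructor
    · intro h u; by_cases hu : u = v <;> simp [hu, h]
    · intro h; have := h v; simpa using this
  rw [hset, Measure.pi_pi]
  have : ∀ u : V, (PMF.bernoulli p hp).toMeasure (if u = v then ({true} : Set Bool) else Set.univ)
      = if u = v then (p : ℝ≥0∞) else 1 := by
    intro u; by_cases hu : u = v <;> simp only [hu, if_true, if_false, bern_true', measure_univ]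
  simp_rw [this]
  simp

private lemma real_pow_bound' {x : ℝ} (hx : 2 ≤ x) {k : ℕ} (hk : 10 * x * Real.log x ≤ k) :
    (1 - 1 / x) ^ k ≤ x ^ (-(10 : ℝ)) := by
  have hx0 : 0 < x := by linarith
  have h0 : 0 ≤ 1 - 1 / x := by
    have : 1 / x ≤ 1 := by rw [div_le_one hx0]; linarith
    linarith
  have h1 : 1 - 1 / x ≤ Real.exp (-(1 / x)) := by
    have := Real.add_one_le_exp (-(1 / x)); linarith
  have h2 : (1 - 1 / x) ^ k ≤ Real.exp (-(1 / x)) ^ k := pow_le_pow_left₀ h0 h1 k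
  have h3 : Real.exp (-(1 / x)) ^ k = Real.exp (-((k : ℝ) / x)) := by
    rw [← Real.exp_nat_mul]; ring_nf
  have h4 : Real.exp (-((k : ℝ) / x)) ≤ Real.exp (-(10 * Real.log x)) := by
    apply Real.exp_le_exp.mpr
    rw [neg_le_neg_iff, le_div_iff₀ hx0]
    linarith
  have h5 : Real.exp (-(10 * Real.log x)) = x ^ (-(10 : ℝ)) := by
    rw [Real.rpow_def_of_pos hx0]; ring_nf
  calc (1 - 1 / x) ^ k ≤ Real.exp (-(1 / x)) ^ k := h2
    _ = Real.exp (-((k : ℝ) / x)) := h3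
    _ ≤ Real.exp (-(10 * Real.log x)) := h4
    _ = x ^ (-(10 : ℝ)) := h5

omit [DecidableEq V] in
private lemma integral_card_filter' {μ : Measure (V → Bool)} [IsProbabilityMeasure μ]
    (P : (V → Bool) → V → Prop) [inst : ∀ ω, DecidablePred fun v => P ω v] :
    ∫ ω, ((Finset.univ.filter fun v => P ω v).card : ℝ) ∂μ
      = ∑ v : V, (μ {ω | P ω v}).toReal := by
  have h1 : ∀ ω, ((Finset.univ.filter fun v => P ω v).card : ℝ)
      = ∑ v : V, Set.indicator {ω' | P ω' v} (fun _ => (1 : ℝ)) ω := by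
    intro ω
    rw [Finset.card_filter]
    push_cast
    exact Finset.sum_congr rfl fun v _ => by simp [Set.indicator_apply, Set.mem_setOf_eq]
  simp_rw [h1]
  rw [integral_finset_sum _ fun v _ => Integrable.of_finite]
  exact Finset.sum_congr rfl fun v _ => by
    rw [integral_indicator_const (1 : ℝ) MeasurableSet.of_discrete]; simp [measureReal_def]

end Helpers

/-- In the ultra-sparse contraction procedure with independent vertex-sampling
probability `1/x` (`x ≥ 2`): the expected size of the sample `D` is `n/x`; every vertex
(heavy or light) that is unsampled yet is its own cluster head (`f v = some v`) has
probability at most `x⁻¹⁰` of this event; and consequently the expected number of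
vertices with `f v = some v` (the vertex count of the contracted graph) is at most
`2n/x`.  The hypotheses record the structural facts: an unsampled heavy vertex is its
own head only if its whole closed neighborhood is unsampled, and an unsampled light
vertex is its own head only if the at least `10 x log x` vertices within distance
`10 x log x` of it are all unsampled. -/
theorem ultra_contract_expected_vertices
    {V : Type} [Fintype V] [DecidableEq V]
    (G : SimpleGraph V) [DecidableRel G.Adj] (x : ℝ) (hx : 2 ≤ x)
    (f : (V → Bool) → V → Option V)
    (hfD : ∀ ω v, ω v = true → f ω v = some v)
    (hheavy : ∀ ω v, 10 * x * Real.log x ≤ (G.degree v : ℝ) →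
      f ω v = some v → ω v = false → ∀ w, G.Adj v w → ω w = false)
    (hlight : ∀ ω v, (G.degree v : ℝ) < 10 * x * Real.log x →
      f ω v = some v → ω v = false →
      10 * x * Real.log x ≤ ((Finset.univ.filter fun u =>
          u ≠ v ∧ G.Reachable v u ∧ (G.dist v u : ℝ) ≤ 10 * x * Real.log x).card : ℝ) ∧
      ∀ u, G.Reachable v u → (G.dist v u : ℝ) ≤ 10 * x * Real.log x → ω u = false) :
    (∫ ω : V → Bool, ((Finset.univ.filter fun v => ω v = true).card : ℝ)
        ∂ (Measure.pi fun _ : V =>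
            (PMF.bernoulli (Real.toNNReal (1 / x))
              (by
                have hx1 : (1 : ℝ) / x ≤ 1 := by
                  rw [div_le_one (by linarith)]; linarith
                exact Real.toNNReal_le_one.mpr hx1)).toMeasure)
      = (Fintype.card V : ℝ) / x) ∧
    (∀ v : V,
      (Measure.pi fun _ : V =>
          (PMF.bernoulli (Real.toNNReal (1 / x))
            (by
              have hx1 : (1 : ℝ) / x ≤ 1 := by
                rw [div_le_one (by linarith)]; linarith
              exact Real.toNNReal_le_one.mpr hx1)).toMeasure)
        {ω : V → Bool | f ω v = some v ∧ ω v = false}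
        ≤ ENNReal.ofReal (x ^ (-(10 : ℝ)))) ∧
    (∫ ω : V → Bool, ((Finset.univ.filter fun v => f ω v = some v).card : ℝ)
        ∂ (Measure.pi fun _ : V =>
            (PMF.bernoulli (Real.toNNReal (1 / x))
              (by
                have hx1 : (1 : ℝ) / x ≤ 1 := by
                  rw [div_le_one (by linarith)]; linarith
                exact Real.toNNReal_le_one.mpr hx1)).toMeasure)
      ≤ 2 * (Fintype.card V : ℝ) / x) := by
  have hx0 : (0 : ℝ) < x := by linarith
  have hx1 : (1 : ℝ) / x ≤ 1 := by rw [div_le_one hx0]; linarith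
  have hp : Real.toNNReal (1 / x) ≤ 1 := Real.toNNReal_le_one.mpr hx1
  set μ : Measure (V → Bool) :=
    Measure.pi fun _ : V => (PMF.bernoulli (Real.toNNReal (1 / x)) hp).toMeasure with hμ
  -- Part 2
  have key : ∀ (E : Set (V → Bool)) (S : Finset V), 10 * x * Real.log x ≤ (S.card : ℝ) →
      E ⊆ {ω : V → Bool | ∀ u ∈ S, ω u = false} →
      μ E ≤ ENNReal.ofReal (x ^ (-(10 : ℝ))) := by
    intro E S hS hsub
    have h0 : 0 ≤ 1 - 1 / x := by linarith
    calc μ E ≤ μ {ω : V → Bool | ∀ u ∈ S, ω u = false} := measure_mono hsub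
      _ = (1 - ENNReal.ofReal (1 / x)) ^ S.card := pi_cyl' _ hp S
      _ = ENNReal.ofReal ((1 - 1 / x) ^ S.card) := by
          rw [ENNReal.ofReal_pow h0, ENNReal.ofReal_sub _ (by positivity), ENNReal.ofReal_one]
      _ ≤ ENNReal.ofReal (x ^ (-(10 : ℝ))) :=
          ENNReal.ofReal_le_ofReal (real_pow_bound' hx hS)
  have hpart2 : ∀ v : V, μ {ω : V → Bool | f ω v = some v ∧ ω v = false}
      ≤ ENNReal.ofReal (x ^ (-(10 : ℝ))) := by
    intro v
    by_cases hd : 10 * x * Real.log x ≤ (G.degree v : ℝ)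
    · refine key _ (insert v (G.neighborFinset v)) ?_ ?_
      · have hv : v ∉ G.neighborFinset v := by simp
        rw [Finset.card_insert_of_notMem hv]
        have : (G.neighborFinset v).card = G.degree v := G.card_neighborFinset_eq_degree v
        rw [this]
        push_cast
        linarith
      · intro ω hω u hu
        obtain ⟨h1, h2⟩ := hω
        rcases Finset.mem_insert.mp hu with rfl | hu'
        · exact h2
        · exact hheavy ω v hd h1 h2 u ((G.mem_neighborFinset _ _).mp hu')
    · push_neg at hd
      set E := {ω : V → Bool | f ω v = some v ∧ ω v = false} with hE
      rcases Set.eq_empty_or_nonempty E with hemp | ⟨ω₀, hω₀⟩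
      · rw [hemp]; simp
      · set T := Finset.univ.filter fun u =>
          u ≠ v ∧ G.Reachable v u ∧ (G.dist v u : ℝ) ≤ 10 * x * Real.log x with hT
        have hcard := (hlight ω₀ v hd hω₀.1 hω₀.2).1
        refine key _ (insert v T) ?_ ?_
        · have : (T.card : ℝ) ≤ ((insert v T).card : ℝ) := by
            exact_mod_cast Finset.card_le_card (Finset.subset_insert v T)
          linarith
        · intro ω hω u hu
          obtain ⟨h1, h2⟩ := hω
          rcases Finset.mem_insert.mp hu with rfl | hu'
          · exact h2
          · obtain ⟨_, hr, hdist⟩ := (Finset.mem_filter.mp hu').2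
            exact (hlight ω v hd h1 h2).2 u hr hdist
  -- Part 1
  have hpart1 : ∫ ω : V → Bool, ((Finset.univ.filter fun v => ω v = true).card : ℝ) ∂μ
      = (Fintype.card V : ℝ) / x := by
    rw [integral_card_filter' (fun ω v => ω v = true)]
    have : ∀ v : V, (μ {ω : V → Bool | ω v = true}).toReal = 1 / x := by
      intro v
      rw [hμ, pi_true' _ hp v, ENNReal.coe_toReal, Real.coe_toNNReal _ (by positivity)]
    simp_rw [this]
    rw [Finset.sum_const, Finset.card_univ, nsmul_eq_mul]
    ring
  refine ⟨hpart1, hpart2, ?_⟩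
  -- Part 3
  have hb : ∀ ω : V → Bool, ((Finset.univ.filter fun v => f ω v = some v).card : ℝ)
      ≤ ((Finset.univ.filter fun v => ω v = true).card : ℝ)
        + ((Finset.univ.filter fun v => f ω v = some v ∧ ω v = false).card : ℝ) := by
    intro ω
    have hsub : (Finset.univ.filter fun v => f ω v = some v)
        ⊆ (Finset.univ.filter fun v => ω v = true)
          ∪ (Finset.univ.filter fun v => f ω v = some v ∧ ω v = false) := by
      intro v hv
      have hfv := (Finset.mem_filter.mp hv).2
      rcases Bool.eq_false_or_eq_true (ω v) with h | h
      · exact Finset.mem_union_left _ (Finset.mem_filter.mpr ⟨Finset.mem_univ v, h⟩)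
      · exact Finset.mem_union_right _ (Finset.mem_filter.mpr ⟨Finset.mem_univ v, hfv, h⟩)
    calc ((Finset.univ.filter fun v => f ω v = some v).card : ℝ)
        ≤ (((Finset.univ.filter fun v => ω v = true)
            ∪ (Finset.univ.filter fun v => f ω v = some v ∧ ω v = false)).card : ℝ) := by
          exact_mod_cast Finset.card_le_card hsub
      _ ≤ _ := by exact_mod_cast Finset.card_union_le _ _
  have hint : ∫ ω : V → Bool, ((Finset.univ.filter fun v => f ω v = some v).card : ℝ) ∂μ
      ≤ ∫ ω : V → Bool, (((Finset.univ.filter fun v => ω v = true).card : ℝ)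
        + ((Finset.univ.filter fun v => f ω v = some v ∧ ω v = false).card : ℝ)) ∂μ :=
    integral_mono Integrable.of_finite Integrable.of_finite hb
  rw [integral_add Integrable.of_finite Integrable.of_finite, hpart1,
    integral_card_filter' (fun ω v => f ω v = some v ∧ ω v = false)] at hint
  have hsum : ∑ v : V, (μ {ω : V → Bool | f ω v = some v ∧ ω v = false}).toReal
      ≤ (Fintype.card V : ℝ) / x := by
    have hstep : ∀ v : V, (μ {ω : V → Bool | f ω v = some v ∧ ω v = false}).toReal
        ≤ x ^ (-(10 : ℝ)) := fun v =>
      ENNReal.toReal_le_of_le_ofReal (Real.rpow_nonneg (le_of_lt hx0) _) (hpart2 v)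
    calc ∑ v : V, (μ {ω : V → Bool | f ω v = some v ∧ ω v = false}).toReal
        ≤ ∑ _v : V, x ^ (-(10 : ℝ)) := Finset.sum_le_sum fun v _ => hstep v
      _ = (Fintype.card V : ℝ) * x ^ (-(10 : ℝ)) := by
          rw [Finset.sum_const, Finset.card_univ, nsmul_eq_mul]
      _ ≤ (Fintype.card V : ℝ) * x ^ (-(1 : ℝ)) := by
          apply mul_le_mul_of_nonneg_left _ (Nat.cast_nonneg _)
          exact Real.rpow_le_rpow_of_exponent_le (by linarith) (by norm_num)
      _ = (Fintype.card V : ℝ) / x := by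
          rw [Real.rpow_neg_one]; ring
  calc ∫ ω : V → Bool, ((Finset.univ.filter fun v => f ω v = some v).card : ℝ) ∂μ
      ≤ (Fintype.card V : ℝ) / x
        + ∑ v : V, (μ {ω : V → Bool | f ω v = some v ∧ ω v = false}).toReal := hint
    _ ≤ (Fintype.card V : ℝ) / x + (Fintype.card V : ℝ) / x := by linarith
    _ = 2 * (Fintype.card V : ℝ) / x := by ring
end
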